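/- Let R be a commutative ring, f a nonzerodivisor, and let φ : R^m → R^m be an injective R-linear map with coker(φ) annihilated by f. Then for every k ≥ 1, the cokernel of Λ^k φ : Λ^k R^m → Λ^k R^m is annihilated by f^k. -/

import Mathlib

open ExteriorAlgebra

variable {R M N : Type*} [CommRing R] [AddCommGroup M] [Module R M] [AddCommGroup N] [Module R N]

theorem extPowerMap_mem (k : ℕ) (f : M →ₗ[R] N) :
    ∀ x ∈ ⋀[R]^k M, ExteriorAlgebra.map f x ∈ ⋀[R]^k N := by
  intro x hx
  have h : Submodule.map (ExteriorAlgebra.map f).toLinearMap (⋀[R]^k M) ≤ ⋀[R]^k N := by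
    rw [← ιMulti_span_fixedDegree, ← ιMulti_span_fixedDegree, Submodule.map_span]
    refine Submodule.span_mono ?_
    rintro _ ⟨_, ⟨v, rfl⟩, rfl⟩
    exact ⟨f ∘ v, (ExteriorAlgebra.map_apply_ιMulti f v).symm⟩
  exact h ⟨x, hx, rfl⟩

/-- The map `⋀^k M → ⋀^k N` on `k`-th exterior powers induced by a linear map
`f : M → N`. -/
noncomputable def extPowerMap (k : ℕ) (f : M →ₗ[R] N) : (⋀[R]^k M) →ₗ[R] (⋀[R]^k N) :=
  (ExteriorAlgebra.map f).toLinearMap.restrict (extPowerMap_mem k f)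

theorem Submodule.forall_smul_quotient_eq_zero_iff {p : Submodule R M} {r : R} :
    (∀ x : M ⧸ p, r • x = 0) ↔ ∀ v : M, r • v ∈ p := by
  simp only [(Submodule.Quotient.mk_surjective p).forall, ← Submodule.Quotient.mk_smul,
    Submodule.Quotient.mk_eq_zero]

theorem extPowerMap_eq_map (k : ℕ) (φ : M →ₗ[R] N) : extPowerMap k φ = exteriorPower.map k φ :=
  exteriorPower.linearMap_ext <| AlternatingMap.ext fun v => by
    rw [LinearMap.compAlternatingMap_apply, LinearMap.compAlternatingMap_apply,
      exteriorPower.map_apply_ιMulti]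
    exact Subtype.ext (ExteriorAlgebra.map_apply_ιMulti φ v)

namespace exteriorPower

/-- On a generator `v₁ ∧ ⋯ ∧ vₖ`, pick `wᵢ` with `φ wᵢ = r • vᵢ`; multilinearity gives
`rᵏ • (v₁ ∧ ⋯ ∧ vₖ) = ⋀ᵏφ (w₁ ∧ ⋯ ∧ wₖ)`. -/
theorem pow_smul_mem_range_map {r : R} {φ : M →ₗ[R] N} (h : ∀ v : N, r • v ∈ LinearMap.range φ)
    (k : ℕ) (x : ⋀[R]^k N) : r ^ k • x ∈ LinearMap.range (map k φ) := by
  have hx : x ∈ Submodule.span R (Set.range (ιMulti R k)) := by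
    rw [ιMulti_span]; exact Submodule.mem_top
  induction hx using Submodule.span_induction with
  | mem _ hv =>
    obtain ⟨v, rfl⟩ := hv
    choose w hw using fun i => h (v i)
    refine ⟨ιMulti R k w, ?_⟩
    rw [map_apply_ιMulti, show φ ∘ w = fun i => r • v i from funext hw,
      AlternatingMap.map_smul_univ, Finset.prod_const, Finset.card_univ, Fintype.card_fin]
  | zero => simp
  | add _ _ _ _ hx hy => simpa only [smul_add] using add_mem hx hy
  | smul a _ _ hx => simpa only [smul_comm (r ^ k) a] using Submodule.smul_mem _ a hx

end exteriorPower

theorem coker_exteriorPower_annihilated_general {R : Type*} [CommRing R] {m : ℕ}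
    (f : R)
    (φ : (Fin m → R) →ₗ[R] (Fin m → R))
    (hcoker : ∀ x : (Fin m → R) ⧸ LinearMap.range φ, f • x = 0)
    (k : ℕ) :
    ∀ y : (⋀[R]^k (Fin m → R)) ⧸ LinearMap.range (extPowerMap k φ), f ^ k • y = 0 := by
  rw [Submodule.forall_smul_quotient_eq_zero_iff] at hcoker ⊢
  rw [extPowerMap_eq_map]
  exact exteriorPower.pow_smul_mem_range_map hcoker k

/-- If `φ : R^m → R^m` is an injective linear map whose cokernel is annihilated by a
nonzerodivisor `f`, then for every `k ≥ 1` the cokernel of `⋀^k φ` is annihilated by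
`f^k`. -/
theorem coker_exteriorPower_annihilated {R : Type*} [CommRing R] {m : ℕ}
    (f : R) (hf : f ∈ nonZeroDivisors R)
    (φ : (Fin m → R) →ₗ[R] (Fin m → R)) (hφ : Function.Injective φ)
    (hcoker : ∀ x : (Fin m → R) ⧸ LinearMap.range φ, f • x = 0)
    (k : ℕ) (hk : 1 ≤ k) :
    ∀ y : (⋀[R]^k (Fin m → R)) ⧸ LinearMap.range (extPowerMap k φ), f ^ k • y = 0 :=
  coker_exteriorPower_annihilated_general f φ hcoker k
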